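/- arXiv:1304.0063 — 10 statements merged into one kernel-verified Lean document; each statement's English description precedes it below -/
import Mathlib

section
/- The relation ≺ defined on the nonzero elements of K by a ≺ b if and only if a/b ∈ 𝓕(D) is a strict partial order: it is irreflexive (never a ≺ a) and transitive (a ≺ b and b ≺ c imply a ≺ c). -/
/-- `x ∈ 𝓕(D)` : `x : K` is expressible as a finite product `π₁ ⋯ πₙ` (`n ≥ 1`) of
irreducible elements of `D`, viewed in `K` via the algebra map. -/
def MemFD (D : Type*) {K : Type*} [CommRing D] [Field K] [Algebra D K] (x : K) : Prop :=
  ∃ l : List D, l ≠ [] ∧ (∀ p ∈ l, Irreducible p) ∧ x = algebraMap D K l.prod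

/-- The relation `a ≺ b ↔ a / b ∈ 𝓕(D)` on the nonzero elements of the fraction
field `K` of an integral domain `D` is irreflexive and transitive. -/
theorem graph_of_divisibility_strict_partial_order
    (D K : Type*) [CommRing D] [IsDomain D] [Field K] [Algebra D K] [IsFractionRing D K] :
    (∀ a : K, a ≠ 0 → ¬ MemFD D (a / a)) ∧
    (∀ a b c : K, a ≠ 0 → b ≠ 0 → c ≠ 0 →
      MemFD D (a / b) → MemFD D (b / c) → MemFD D (a / c)) := by
  constructor
  · rintro a ha ⟨l, hne, hirr, hprod⟩
    rw [div_self ha] at hprod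
    have h1 : algebraMap D K 1 = algebraMap D K l.prod := by simpa using hprod
    have : (1 : D) = l.prod := IsFractionRing.injective D K h1
    obtain ⟨p, hp⟩ := List.exists_mem_of_ne_nil l hne
    have hdvd : p ∣ l.prod := List.dvd_prod hp
    rw [← this] at hdvd
    exact (hirr p hp).not_isUnit (isUnit_of_dvd_one hdvd)
  · rintro a b c ha hb hc ⟨l₁, hne₁, hirr₁, hp₁⟩ ⟨l₂, hne₂, hirr₂, hp₂⟩
    refine ⟨l₁ ++ l₂, by simp [hne₁], ?_, ?_⟩
    · intro p hp
      rcases List.mem_append.mp hp with h | h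
      · exact hirr₁ p h
      · exact hirr₂ p h
    · have : a / c = (a / b) * (b / c) := by field_simp
      rw [this, hp₁, hp₂, List.prod_append, map_mul]
end

section
/- Let a and b be nonzero elements of K with a/b ∈ 𝓕(D). Then a/b is an irreducible element of D if and only if there is no nonzero x ∈ K such that both a/x ∈ 𝓕(D) and x/b ∈ 𝓕(D). -/
lemma List.not_isUnit_prod_of_irreducible {M : Type*} [CommMonoid M] {l : List M} (hl : l ≠ [])
    (hirr : ∀ p ∈ l, Irreducible p) : ¬ IsUnit l.prod := by
  obtain ⟨p, hp⟩ := List.exists_mem_of_ne_nil l hl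
  exact fun hu => (hirr p hp).not_isUnit (List.prod_isUnit_iff.mp hu p hp)

section MemFD

variable {D K : Type*} [CommRing D] [Field K] [Algebra D K]

lemma MemFD.ne_zero [IsDomain D] [FaithfulSMul D K] {x : K} (hx : MemFD D x) : x ≠ 0 := by
  obtain ⟨l, -, hirr, rfl⟩ := hx
  rw [map_ne_zero_iff _ (FaithfulSMul.algebraMap_injective D K)]
  exact List.prod_ne_zero fun h0 => (hirr 0 h0).ne_zero rfl

lemma not_irreducible_of_algebraMap_eq_mul [FaithfulSMul D K] {π : D} {y z : K}
    (hπ : algebraMap D K π = y * z) (hy : MemFD D y) (hz : MemFD D z) : ¬ Irreducible π := by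
  obtain ⟨l, hl, hlirr, rfl⟩ := hy
  obtain ⟨m, hm, hmirr, rfl⟩ := hz
  intro hirr
  rw [← map_mul] at hπ
  rcases hirr.isUnit_or_isUnit (FaithfulSMul.algebraMap_injective D K hπ) with hu | hu
  · exact l.not_isUnit_prod_of_irreducible hl hlirr hu
  · exact m.not_isUnit_prod_of_irreducible hm hmirr hu

lemma MemFD.exists_eq_mul {y : K} (hy : MemFD D y)
    (hy_ne : ¬ ∃ π : D, Irreducible π ∧ y = algebraMap D K π) :
    ∃ u v : K, MemFD D u ∧ MemFD D v ∧ y = u * v := by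
  obtain ⟨_ | ⟨p, _ | ⟨q, s⟩⟩, hl, hirr, rfl⟩ := hy
  · exact absurd rfl hl
  · exact absurd ⟨p, hirr p (by simp), by simp⟩ hy_ne
  · refine ⟨algebraMap D K p, algebraMap D K (q :: s).prod,
      ⟨[p], by simp, by simpa using hirr p (by simp), by simp⟩,
      ⟨q :: s, by simp, fun r hr => hirr r (List.mem_cons_of_mem p hr), rfl⟩, ?_⟩
    rw [List.prod_cons, map_mul]

end MemFD

theorem edge_iff_irreducible_general
    (D K : Type*) [CommRing D] [IsDomain D] [Field K] [Algebra D K] [IsFractionRing D K]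
    (a b : K) (hb : b ≠ 0) (hab : MemFD D (a / b)) :
    (∃ π : D, Irreducible π ∧ a / b = algebraMap D K π) ↔
      ¬ ∃ x : K, x ≠ 0 ∧ MemFD D (a / x) ∧ MemFD D (x / b) := by
  constructor
  · rintro ⟨π, hπ, hπeq⟩ ⟨x, hx, hax, hxb⟩
    refine not_irreducible_of_algebraMap_eq_mul ?_ hax hxb hπ
    rw [← hπeq, div_mul_div_cancel₀ hx]
  · intro hno
    by_contra hπ
    obtain ⟨u, v, hu, hv, huv⟩ := hab.exists_eq_mul hπ
    have hv0 := hv.ne_zero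
    refine hno ⟨b * v, mul_ne_zero hb hv0, ?_, by rwa [mul_div_cancel_left₀ v hb]⟩
    rwa [← div_div, huv, mul_div_cancel_right₀ u hv0]

/-- For nonzero `a b : K` with `a / b ∈ 𝓕(D)`, the quotient `a / b` is an irreducible
element of `D` if and only if there is no nonzero `x : K` with `a / x ∈ 𝓕(D)` and
`x / b ∈ 𝓕(D)`. -/
theorem edge_iff_irreducible
    (D K : Type*) [CommRing D] [IsDomain D] [Field K] [Algebra D K] [IsFractionRing D K]
    (a b : K) (ha : a ≠ 0) (hb : b ≠ 0) (hab : MemFD D (a / b)) :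
    (∃ π : D, Irreducible π ∧ a / b = algebraMap D K π) ↔
      ¬ ∃ x : K, x ≠ 0 ∧ MemFD D (a / x) ∧ MemFD D (x / b) :=
  edge_iff_irreducible_general D K a b hb hab
end

section
/- D satisfies the ascending chain condition on principal ideals (ACCP) if and only if both of the following hold: (i) there is no infinite sequence a₀, a₁, a₂, … of nonzero nonunit elements of D such that for every i the quotient aᵢ/aᵢ₊₁ lies in D and is irreducible; and (ii) every nonzero nonunit b ∈ D that cannot be written as b = ξc with ξ ∈ D irreducible and c ∈ D a nonzero nonunit is itself irreducible. -/
/-!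
ACCP in a domain is well-foundedness of strict divisibility (`WfDvdMonoid`). Strict divisibility
restricted to quotients that are atoms is then well-founded by (i), and (ii) holds since in a
`WfDvdMonoid` every nonzero nonunit has an irreducible factor. Conversely, induct along atom
quotients: if `b = c * q` with `q` a nonzero nonunit, either `q` is an atom, or by (ii)
`q = ξ * e` with `ξ` an atom and `e` a nonzero nonunit, and then `c` strictly divides `e * c`,
which is one atom quotient below `b`.
-/

theorem Set.wellFoundedOn_gt_iff_forall_chain_stabilizes {α : Type*} [PartialOrder α]
    (s : Set α) :
    s.WellFoundedOn (· > ·) ↔ ∀ f : ℕ → α, (∀ i, f i ∈ s) → (∀ i, f i ≤ f (i + 1)) →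
      ∃ N, ∀ n, N ≤ n → f n = f N := by
  rw [Set.WellFoundedOn, ← isWellFounded_iff]
  change WellFoundedGT s ↔ _
  rw [wellFoundedGT_iff_monotone_chain_condition]
  constructor
  · intro h f hs hle
    obtain ⟨N, hN⟩ := h ⟨fun i => ⟨f i, hs i⟩, monotone_nat_of_le_succ hle⟩
    exact ⟨N, fun n hn => congrArg Subtype.val (hN n hn).symm⟩
  · intro h a
    obtain ⟨N, hN⟩ := h (fun i => a i) (fun i => (a i).2) (fun i => a.mono i.le_succ)
    exact ⟨N, fun n hn => Subtype.ext (hN n hn).symm⟩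

theorem wfDvdMonoid_iff_isPrincipal_wellFoundedOn_gt {α : Type*} [CommSemiring α] [IsDomain α] :
    WfDvdMonoid α ↔ {I : Ideal α | I.IsPrincipal}.WellFoundedOn (· > ·) :=
  ⟨fun _ => Ideal.setOfPred_isPrincipal_wellFoundedOn_gt,
    WfDvdMonoid.of_setOfPred_isPrincipal_wellFoundedOn_gt⟩

section AtomDvd

variable {α : Type*} [CommMonoidWithZero α]

/-- The condition `c ≠ 0` rules out the loop `0 = π * 0`. -/
def AtomDvd (c b : α) : Prop :=
  c ≠ 0 ∧ ∃ π, Irreducible π ∧ b = π * c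

theorem AtomDvd.dvdNotUnit {c b : α} (h : AtomDvd c b) : DvdNotUnit c b := by
  obtain ⟨hc0, π, hπ, rfl⟩ := h
  exact ⟨hc0, π, hπ.not_isUnit, mul_comm π c⟩

theorem WfDvdMonoid.wellFounded_atomDvd [WfDvdMonoid α] : WellFounded (AtomDvd (α := α)) :=
  Subrelation.wf (fun h => h.dvdNotUnit) wellFounded_dvdNotUnit

theorem wellFounded_atomDvd_iff [NoZeroDivisors α] :
    WellFounded (AtomDvd (α := α)) ↔ ¬∃ a : ℕ → α, (∀ i, a i ≠ 0 ∧ ¬IsUnit (a i)) ∧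
      ∀ i, ∃ π, Irreducible π ∧ a i = π * a (i + 1) := by
  rw [wellFounded_iff_isEmpty_descending_chain, ← not_nonempty_iff, nonempty_subtype]
  refine not_congr ⟨fun ⟨a, ha⟩ => ⟨a, fun i => ?_, fun i => (ha i).2⟩,
    fun ⟨a, ha, hπ⟩ => ⟨a, fun i => ⟨(ha (i + 1)).1, hπ i⟩⟩⟩
  obtain ⟨hc0, π, hπ, hi⟩ := ha i
  rw [hi]
  exact ⟨mul_ne_zero hπ.ne_zero hc0, fun h => hπ.not_isUnit (isUnit_of_mul_isUnit_left h)⟩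

theorem WfDvdMonoid.irreducible_of_not_exists_irreducible_mul [WfDvdMonoid α] {b : α}
    (hb0 : b ≠ 0) (hbu : ¬IsUnit b)
    (h : ¬∃ ξ c : α, Irreducible ξ ∧ c ≠ 0 ∧ ¬IsUnit c ∧ b = ξ * c) : Irreducible b := by
  refine ⟨hbu, fun x y hxy => ?_⟩
  by_contra! ⟨hxu, hyu⟩
  obtain ⟨ξ, hξ, d, rfl⟩ := exists_irreducible_factor hxu (left_ne_zero_of_mul (hxy ▸ hb0))
  rw [mul_assoc] at hxy
  exact h ⟨ξ, d * y, hξ, right_ne_zero_of_mul (hxy ▸ hb0),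
    fun hdy => hyu (isUnit_of_mul_isUnit_right hdy), hxy⟩

theorem wfDvdMonoid_of_wellFounded_atomDvd [NoZeroDivisors α]
    (hwf : WellFounded (AtomDvd (α := α)))
    (hsplit : ∀ b : α, b ≠ 0 → ¬IsUnit b →
      (¬∃ ξ c : α, Irreducible ξ ∧ c ≠ 0 ∧ ¬IsUnit c ∧ b = ξ * c) → Irreducible b) :
    WfDvdMonoid α := by
  have hacc : ∀ b : α, b ≠ 0 → Acc DvdNotUnit b := by
    intro b
    induction b using hwf.induction with
    | _ b ih =>
      intro hb0
      refine Acc.intro b fun c ⟨hc0, q, hqu, hb⟩ => ?_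
      have hq0 : q ≠ 0 := right_ne_zero_of_mul (hb ▸ hb0)
      by_cases hq : Irreducible q
      · exact ih c ⟨hc0, q, hq, hb.trans (mul_comm c q)⟩ hc0
      · obtain ⟨ξ, e, hξ, he0, heu, rfl⟩ := not_imp_comm.1 (hsplit q hq0 hqu) hq
        have hec : e * c ≠ 0 := mul_ne_zero he0 hc0
        exact (ih (e * c) ⟨hec, ξ, hξ, by rw [hb]; ac_rfl⟩ hec).inv ⟨hc0, e, heu, mul_comm e c⟩
  refine ⟨⟨fun b => ?_⟩⟩
  by_cases hb0 : b = 0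
  · exact Acc.intro b fun c hc => hacc c hc.1
  · exact hacc b hb0

theorem wfDvdMonoid_iff_wellFounded_atomDvd [NoZeroDivisors α] :
    WfDvdMonoid α ↔ WellFounded (AtomDvd (α := α)) ∧ ∀ b : α, b ≠ 0 → ¬IsUnit b →
      (¬∃ ξ c : α, Irreducible ξ ∧ c ≠ 0 ∧ ¬IsUnit c ∧ b = ξ * c) → Irreducible b :=
  ⟨fun _ => ⟨WfDvdMonoid.wellFounded_atomDvd,
      fun _ hb0 hbu => WfDvdMonoid.irreducible_of_not_exists_irreducible_mul hb0 hbu⟩,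
    fun ⟨hwf, hsplit⟩ => wfDvdMonoid_of_wellFounded_atomDvd hwf hsplit⟩

end AtomDvd

/-- `D` satisfies ACCP iff (i) there is no infinite sequence `a₀, a₁, a₂, …` of nonzero
nonunits of `D` with each quotient `aᵢ / aᵢ₊₁` in `D` irreducible, and (ii) every
nonzero nonunit `b` which cannot be written `b = ξ * c` with `ξ` irreducible and `c` a
nonzero nonunit is itself irreducible. -/
theorem accp_iff_paths_terminate_at_atoms (D : Type*) [CommRing D] [IsDomain D] :
    (∀ f : ℕ → Ideal D, (∀ i, (f i).IsPrincipal) → (∀ i, f i ≤ f (i + 1)) →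
        ∃ N, ∀ n, N ≤ n → f n = f N) ↔
      ((¬ ∃ a : ℕ → D, (∀ i, a i ≠ 0 ∧ ¬ IsUnit (a i)) ∧
          ∀ i, ∃ π : D, Irreducible π ∧ a i = π * a (i + 1)) ∧
        (∀ b : D, b ≠ 0 → ¬ IsUnit b →
          (¬ ∃ ξ c : D, Irreducible ξ ∧ c ≠ 0 ∧ ¬ IsUnit c ∧ b = ξ * c) →
          Irreducible b)) := by
  rw [← wellFounded_atomDvd_iff, ← wfDvdMonoid_iff_wellFounded_atomDvd,
    wfDvdMonoid_iff_isPrincipal_wellFoundedOn_gt]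
  exact (Set.wellFoundedOn_gt_iff_forall_chain_stabilizes _).symm
end

section
/- D is a bounded factorization domain (BFD) if and only if both of the following hold: (i) for every nonzero nonunit a ∈ D there exists N ∈ ℕ such that every chain a = a₀, a₁, …, aₙ from a has n ≤ N; and (ii) every nonzero nonunit b ∈ D that cannot be written as b = ξc with ξ ∈ D irreducible and c ∈ D a nonzero nonunit is itself irreducible. -/
/-!
Chains from `a` and factorizations of `a` are two views of the same data: the tails
`(l.drop i).prod` of a factorization `l` form a chain of length `l.length - 1`, and a chain of
length `n` from `a`, completed by a factorization of its last term, yields a factorization of `a`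
of length greater than `n`. Atomicity follows from (i) and (ii) by induction on the chain bound:
either `a` admits no splitting `a = ξ * c` and is irreducible by (ii), or it does, and the chain
bound of `c` is smaller than that of `a`.
-/

/-- A chain from a nonzero nonunit `a` : a finite sequence `a = f 0, f 1, …, f n` of
nonzero nonunit elements of `D` such that for `1 ≤ i ≤ n` the quotient `f (i-1) / f i`
lies in `D` and is irreducible, i.e. `f (i-1) = π * f i` for some irreducible `π`. -/
def IsChainFrom (D : Type*) [CommRing D] (a : D) (n : ℕ) (f : ℕ → D) : Prop :=
  f 0 = a ∧ (∀ i ≤ n, f i ≠ 0 ∧ ¬ IsUnit (f i)) ∧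
    ∀ i, 1 ≤ i → i ≤ n → ∃ π : D, Irreducible π ∧ f (i - 1) = π * f i

lemma List.prod_ne_zero_of_forall_irreducible {M₀ : Type*} [MonoidWithZero M₀]
    [NoZeroDivisors M₀] [Nontrivial M₀] {l : List M₀} (hl : ∀ p ∈ l, Irreducible p) :
    l.prod ≠ 0 :=
  List.prod_ne_zero fun h0 => (hl 0 h0).ne_zero rfl

lemma List.not_isUnit_prod_of_forall_irreducible {M : Type*} [CommMonoid M] {l : List M}
    (hne : l ≠ []) (hl : ∀ p ∈ l, Irreducible p) : ¬ IsUnit l.prod := fun hu =>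
  (hl _ (List.head_mem hne)).not_isUnit (List.prod_isUnit_iff.1 hu _ (List.head_mem hne))

namespace IsChainFrom

variable {D : Type*} [CommRing D] {a : D} {n : ℕ} {f : ℕ → D}

lemma _root_.isChainFrom_iff_succ : IsChainFrom D a n f ↔
    f 0 = a ∧ (∀ i ≤ n, f i ≠ 0 ∧ ¬ IsUnit (f i)) ∧
      ∀ i < n, ∃ π : D, Irreducible π ∧ f i = π * f (i + 1) := by
  refine and_congr_right fun _ => and_congr_right fun _ =>
    ⟨fun h i hi => ?_, fun h i _ hi => ?_⟩
  · simpa using h (i + 1) (by omega) hi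
  · obtain ⟨j, rfl⟩ : ∃ j, i = j + 1 := ⟨i - 1, by omega⟩
    simpa using h j hi

lemma mono {m : ℕ} (hf : IsChainFrom D a n f) (hmn : m ≤ n) : IsChainFrom D a m f := by
  obtain ⟨h0, hnz, hstep⟩ := isChainFrom_iff_succ.1 hf
  exact isChainFrom_iff_succ.2
    ⟨h0, fun i hi => hnz i (hi.trans hmn), fun i hi => hstep i (hi.trans_le hmn)⟩

lemma const {c : D} (hc0 : c ≠ 0) (hcu : ¬ IsUnit c) : IsChainFrom D c 0 fun _ => c :=
  ⟨rfl, fun _ _ => ⟨hc0, hcu⟩, fun _ _ _ => by omega⟩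

lemma cons [IsDomain D] {ξ c : D} (hξ : Irreducible ξ) (hf : IsChainFrom D c n f) :
    IsChainFrom D (ξ * c) (n + 1) fun i => if i = 0 then ξ * c else f (i - 1) := by
  obtain ⟨h0, hnz, hstep⟩ := isChainFrom_iff_succ.1 hf
  refine isChainFrom_iff_succ.2 ⟨rfl, fun i hi => ?_, fun i hi => ?_⟩
  · rcases i with _ | i
    · rw [← h0]
      exact ⟨mul_ne_zero hξ.ne_zero (hnz 0 (Nat.zero_le n)).1,
        fun hu => hξ.not_isUnit (isUnit_of_mul_isUnit_left hu)⟩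
    · simpa using hnz i (by omega)
  · rcases i with _ | i
    · exact ⟨ξ, hξ, by simp [h0]⟩
    · simpa using hstep i (by omega)

lemma exists_prod_eq (hf : IsChainFrom D a n f) :
    ∃ l : List D, (∀ p ∈ l, Irreducible p) ∧ l.length = n ∧ a = l.prod * f n := by
  induction n with
  | zero => exact ⟨[], by simp, rfl, by simp [hf.1]⟩
  | succ n ih =>
    obtain ⟨l, hl, rfl, ha⟩ := ih (hf.mono n.le_succ)
    obtain ⟨π, hπ, hstep⟩ := (isChainFrom_iff_succ.1 hf).2.2 l.length (Nat.lt_succ_self _)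
    refine ⟨l ++ [π], ?_, by simp, by rw [ha, hstep, List.prod_append]; simp [mul_assoc]⟩
    simpa [or_imp, forall_and, hπ] using hl

lemma exists_factorization_length_gt
    (hatomic : ∀ b : D, b ≠ 0 → ¬ IsUnit b →
      ∃ l : List D, l ≠ [] ∧ (∀ p ∈ l, Irreducible p) ∧ b = l.prod)
    (hf : IsChainFrom D a n f) :
    ∃ l : List D, (∀ p ∈ l, Irreducible p) ∧ a = l.prod ∧ n < l.length := by
  obtain ⟨l, hl, rfl, ha⟩ := hf.exists_prod_eq
  obtain ⟨hfn0, hfnu⟩ := hf.2.1 l.length le_rfl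
  obtain ⟨l', hl'ne, hl', hfn⟩ := hatomic _ hfn0 hfnu
  refine ⟨l ++ l', fun p hp => (List.mem_append.1 hp).elim (hl p) (hl' p),
    by rw [List.prod_append, ← hfn, ha], ?_⟩
  simpa using List.length_pos_iff.2 hl'ne

end IsChainFrom

section Domain

variable {D : Type*} [CommRing D] [IsDomain D]

lemma isChainFrom_prod_drop {l : List D} (hne : l ≠ []) (hl : ∀ p ∈ l, Irreducible p) :
    IsChainFrom D l.prod (l.length - 1) fun i => (l.drop i).prod := by
  have hl_drop (i : ℕ) : ∀ p ∈ l.drop i, Irreducible p :=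
    fun p hp => hl p (List.mem_of_mem_drop hp)
  refine isChainFrom_iff_succ.2 ⟨by simp, fun i hi => ?_, fun i hi => ?_⟩
  · have hne_drop : l.drop i ≠ [] := by
      have := List.length_pos_iff.2 hne
      simpa [List.drop_eq_nil_iff] using (by omega : i < l.length)
    exact ⟨List.prod_ne_zero_of_forall_irreducible (hl_drop i),
      List.not_isUnit_prod_of_forall_irreducible hne_drop (hl_drop i)⟩
  · have hi' : i < l.length := by omega
    exact ⟨l[i], hl _ (List.getElem_mem hi'),
      by rw [List.drop_eq_getElem_cons hi', List.prod_cons]⟩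

lemma length_le_of_isChainFrom_bound {a : D} {N : ℕ}
    (hN : ∀ (n : ℕ) (f : ℕ → D), IsChainFrom D a n f → n ≤ N) {l : List D}
    (hl : ∀ p ∈ l, Irreducible p) (ha : a = l.prod) : l.length ≤ N + 1 := by
  rcases eq_or_ne l [] with rfl | hne
  · simp
  · have := hN _ _ (ha ▸ isChainFrom_prod_drop hne hl)
    omega

lemma irreducible_of_not_exists_irreducible_mul {b : D} {l : List D} (hne : l ≠ [])
    (hl : ∀ p ∈ l, Irreducible p) (hb : b = l.prod)
    (hsplit : ¬ ∃ ξ c : D, Irreducible ξ ∧ c ≠ 0 ∧ ¬ IsUnit c ∧ b = ξ * c) : Irreducible b := by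
  match l, hne with
  | [p], _ => simpa [hb] using hl
  | p :: q :: t, _ =>
    have hqt : ∀ x ∈ q :: t, Irreducible x := fun x hx => hl x (List.mem_cons_of_mem _ hx)
    exact absurd ⟨p, (q :: t).prod, hl p List.mem_cons_self,
      List.prod_ne_zero_of_forall_irreducible hqt,
      List.not_isUnit_prod_of_forall_irreducible (List.cons_ne_nil _ _) hqt,
      by rw [hb, List.prod_cons]⟩ hsplit

lemma exists_factorization_of_isChainFrom_bound
    (hsplit : ∀ b : D, b ≠ 0 → ¬ IsUnit b →
      (¬ ∃ ξ c : D, Irreducible ξ ∧ c ≠ 0 ∧ ¬ IsUnit c ∧ b = ξ * c) → Irreducible b)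
    (N : ℕ) {a : D} (ha0 : a ≠ 0) (hau : ¬ IsUnit a)
    (hN : ∀ (n : ℕ) (f : ℕ → D), IsChainFrom D a n f → n ≤ N) :
    ∃ l : List D, l ≠ [] ∧ (∀ p ∈ l, Irreducible p) ∧ a = l.prod := by
  induction N using Nat.strong_induction_on generalizing a with
  | _ N ih =>
    by_cases hd : ∃ ξ c : D, Irreducible ξ ∧ c ≠ 0 ∧ ¬ IsUnit c ∧ a = ξ * c
    · obtain ⟨ξ, c, hξ, hc0, hcu, rfl⟩ := hd
      have hc : ∀ (n : ℕ) (f : ℕ → D), IsChainFrom D c n f → n + 1 ≤ N :=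
        fun n f hf => hN _ _ (hf.cons hξ)
      have hN0 := hc 0 _ (IsChainFrom.const hc0 hcu)
      obtain ⟨l, -, hl, rfl⟩ :=
        ih (N - 1) (by omega) hc0 hcu fun n f hf => by have := hc n f hf; omega
      exact ⟨ξ :: l, List.cons_ne_nil _ _, by simpa [hξ] using hl, List.prod_cons.symm⟩
    · exact ⟨[a], List.cons_ne_nil _ _, by simpa using hsplit a ha0 hau hd, by simp⟩

end Domain

/-- `D` is a bounded factorization domain (atomic with bounded factorization lengths)
iff (i) for every nonzero nonunit `a` there is a uniform bound on the lengths of chains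
from `a`, and (ii) every nonzero nonunit `b` which cannot be written `b = ξ * c` with
`ξ` irreducible and `c` a nonzero nonunit is itself irreducible. -/
theorem bfd_iff_bounded_paths (D : Type*) [CommRing D] [IsDomain D] :
    ((∀ a : D, a ≠ 0 → ¬ IsUnit a →
        ∃ l : List D, l ≠ [] ∧ (∀ p ∈ l, Irreducible p) ∧ a = l.prod) ∧
      (∀ a : D, a ≠ 0 → ¬ IsUnit a →
        ∃ N : ℕ, ∀ l : List D, (∀ p ∈ l, Irreducible p) → a = l.prod → l.length ≤ N)) ↔
      ((∀ a : D, a ≠ 0 → ¬ IsUnit a →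
          ∃ N : ℕ, ∀ (n : ℕ) (f : ℕ → D), IsChainFrom D a n f → n ≤ N) ∧
        (∀ b : D, b ≠ 0 → ¬ IsUnit b →
          (¬ ∃ ξ c : D, Irreducible ξ ∧ c ≠ 0 ∧ ¬ IsUnit c ∧ b = ξ * c) →
          Irreducible b)) := by
  constructor
  · rintro ⟨hatomic, hbounded⟩
    refine ⟨fun a ha0 hau => ?_, fun b hb0 hbu hsplit => ?_⟩
    · obtain ⟨N, hN⟩ := hbounded a ha0 hau
      refine ⟨N, fun n f hf => ?_⟩
      obtain ⟨l, hl, ha, hlen⟩ := hf.exists_factorization_length_gt hatomic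
      exact (hlen.trans_le (hN l hl ha)).le
    · obtain ⟨l, hne, hl, hb⟩ := hatomic b hb0 hbu
      exact irreducible_of_not_exists_irreducible_mul hne hl hb hsplit
  · rintro ⟨hchain, hsplit⟩
    refine ⟨fun a ha0 hau => ?_, fun a ha0 hau => ?_⟩ <;> obtain ⟨N, hN⟩ := hchain a ha0 hau
    · exact exists_factorization_of_isChainFrom_bound hsplit N ha0 hau hN
    · exact ⟨N + 1, fun l hl ha => length_le_of_isChainFrom_bound hN hl ha⟩
end

section
/- For nonzero elements a, b ∈ K, the following are equivalent: (1) there exist a unit u of D and irreducible elements π₁, …, πₙ and ξ₁, …, ξₘ of D (with n, m ≥ 0, empty products allowed) such that a/b = u·(π₁⋯πₙ)/(ξ₁⋯ξₘ); (2) there exists a finite sequence of nonzero elements x₀, x₁, …, xₖ of K (k ≥ 0) with x₀D = aD and xₖD = bD as fractional ideals, such that for each 1 ≤ i ≤ k either xᵢ₋₁/xᵢ or xᵢ/xᵢ₋₁ is an irreducible element of D. -/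
/-!
Both conditions say that `a` and `b` agree modulo the subgroup of `Kˣ` generated by the units and
the atoms of `D`. Along a weak path consecutive terms differ by an atom or its inverse, so the
endpoints differ by a unit times a quotient of products of atoms. Conversely, if
`a / b = u * (π₁⋯πₙ) / (ξ₁⋯ξₘ)`, multiplying `a` by the `ξᵢ` one at a time and `u • b` by the
`πᵢ` one at a time reaches the common value `a * ξ₁⋯ξₘ = u • b * π₁⋯πₙ`.
-/

/-- A weak path connecting `a` to `b` in the graph of divisibility: a finite sequence
`x 0, x 1, …, x k` of nonzero elements of `K` with `x 0 • D = a • D` and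
`x k • D = b • D` as fractional ideals, such that each consecutive quotient
`x (i-1) / x i` or `x i / x (i-1)` is an irreducible element of `D`. -/
def WeakPath (D : Type*) {K : Type*} [CommRing D] [Field K] [Algebra D K]
    (a b : K) : Prop :=
  ∃ (k : ℕ) (x : ℕ → K), (∀ i ≤ k, x i ≠ 0) ∧
    Submodule.span D {x 0} = Submodule.span D {a} ∧
    Submodule.span D {x k} = Submodule.span D {b} ∧
    ∀ i, 1 ≤ i → i ≤ k →
      (∃ π : D, Irreducible π ∧ x (i - 1) / x i = algebraMap D K π) ∨
      (∃ π : D, Irreducible π ∧ x i / x (i - 1) = algebraMap D K π)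

open Relation

theorem Relation.ReflTransGen.exists_seq {α : Type*} {r : α → α → Prop} {a b : α}
    (h : ReflTransGen r a b) :
    ∃ (k : ℕ) (x : ℕ → α), x 0 = a ∧ x k = b ∧ ∀ i < k, r (x i) (x (i + 1)) := by
  induction h using ReflTransGen.head_induction_on with
  | refl => exact ⟨0, fun _ => b, rfl, rfl, by simp⟩
  | head hac _ ih =>
    obtain ⟨k, x, hx0, hxk, hx⟩ := ih
    refine ⟨k + 1, fun | 0 => _ | i + 1 => x i, rfl, hxk, ?_⟩
    rintro (_ | i) hi
    · simpa [hx0] using hac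
    · exact hx i (by omega)

section

variable {D K : Type*} [CommRing D] [Field K] [Algebra D K]

variable (D) in
/-- `a` and `b` are *connected* in the paper's sense iff `IsAtomQuotient D (a / b)`. -/
def IsAtomQuotient (q : K) : Prop :=
  ∃ (u : Dˣ) (l₁ l₂ : List D), (∀ p ∈ l₁, Irreducible p) ∧ (∀ p ∈ l₂, Irreducible p) ∧
    q = algebraMap D K (↑u * l₁.prod) / algebraMap D K l₂.prod

namespace IsAtomQuotient

theorem one : IsAtomQuotient D (1 : K) :=
  ⟨1, [], [], by simp, by simp, by simp⟩

theorem of_unit (u : Dˣ) : IsAtomQuotient D (algebraMap D K u) :=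
  ⟨u, [], [], by simp, by simp, by simp⟩

theorem of_irreducible {π : D} (hπ : Irreducible π) : IsAtomQuotient D (algebraMap D K π) :=
  ⟨1, [π], [], by simpa using hπ, by simp, by simp⟩

theorem mul {q r : K} (hq : IsAtomQuotient D q) (hr : IsAtomQuotient D r) :
    IsAtomQuotient D (q * r) := by
  obtain ⟨u, l₁, l₂, h₁, h₂, rfl⟩ := hq
  obtain ⟨v, m₁, m₂, h₁', h₂', rfl⟩ := hr
  refine ⟨u * v, l₁ ++ m₁, l₂ ++ m₂, ?_, ?_, ?_⟩
  · simpa [or_imp, forall_and] using ⟨h₁, h₁'⟩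
  · simpa [or_imp, forall_and] using ⟨h₂, h₂'⟩
  · simp only [List.prod_append, Units.val_mul, map_mul]
    ring

theorem inv {q : K} (hq : IsAtomQuotient D q) : IsAtomQuotient D q⁻¹ := by
  obtain ⟨u, l₁, l₂, h₁, h₂, rfl⟩ := hq
  refine ⟨u⁻¹, l₂, l₁, h₂, h₁, ?_⟩
  simp only [map_mul, map_units_inv, div_eq_mul_inv, mul_inv, inv_inv]
  ring

end IsAtomQuotient

variable (D) in
/-- An edge of the graph of divisibility. -/
def AtomStep (x y : K) : Prop :=
  (∃ π : D, Irreducible π ∧ x / y = algebraMap D K π) ∨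
    (∃ π : D, Irreducible π ∧ y / x = algebraMap D K π)

instance : Std.Symm (AtomStep (K := K) D) where
  symm _ _ := Or.symm

theorem AtomStep.isAtomQuotient_div {x y : K} (h : AtomStep D x y) :
    IsAtomQuotient D (x / y) := by
  rcases h with ⟨π, hπ, h⟩ | ⟨π, hπ, h⟩
  · exact h ▸ .of_irreducible hπ
  · exact inv_div y x ▸ h ▸ (IsAtomQuotient.of_irreducible hπ).inv

theorem atomStep_mul {c : K} (hc : c ≠ 0) {π : D} (hπ : Irreducible π) :
    AtomStep D c (c * algebraMap D K π) :=
  .inr ⟨π, hπ, mul_div_cancel_left₀ _ hc⟩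

variable [IsFractionRing D K]

theorem algebraMap_ne_zero_of_irreducible {π : D} (hπ : Irreducible π) :
    algebraMap D K π ≠ 0 :=
  IsFractionRing.to_map_eq_zero_iff.not.mpr hπ.ne_zero

theorem algebraMap_prod_ne_zero [IsDomain D] {l : List D} (hl : ∀ p ∈ l, Irreducible p) :
    algebraMap D K l.prod ≠ 0 :=
  IsFractionRing.to_map_eq_zero_iff.not.mpr (List.prod_ne_zero fun h => (hl 0 h).ne_zero rfl)

theorem AtomStep.ne_zero {x y : K} (h : AtomStep D x y) : x ≠ 0 ∧ y ≠ 0 := by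
  rcases h with ⟨π, hπ, h⟩ | ⟨π, hπ, h⟩
  · exact div_ne_zero_iff.mp (h ▸ algebraMap_ne_zero_of_irreducible hπ)
  · exact (div_ne_zero_iff.mp (h ▸ algebraMap_ne_zero_of_irreducible hπ)).symm

theorem reflTransGen_atomStep_mul_prod {c : K} (hc : c ≠ 0) {l : List D}
    (hl : ∀ p ∈ l, Irreducible p) :
    ReflTransGen (AtomStep D) c (c * algebraMap D K l.prod) := by
  induction l generalizing c with
  | nil => simpa using ReflTransGen.refl
  | cons π l ih =>
    have hπ : Irreducible π := hl π List.mem_cons_self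
    have hcπ : c * algebraMap D K π ≠ 0 := mul_ne_zero hc (algebraMap_ne_zero_of_irreducible hπ)
    have := ih hcπ fun p hp => hl p (List.mem_cons_of_mem π hp)
    rw [mul_assoc, ← map_mul] at this
    exact .head (atomStep_mul hc hπ) this

theorem isAtomQuotient_div_of_reflTransGen {x y : K} (hx : x ≠ 0)
    (h : ReflTransGen (AtomStep D) x y) : IsAtomQuotient D (x / y) := by
  induction h with
  | refl => simpa [div_self hx] using IsAtomQuotient.one
  | tail _ hyz ih =>
    rw [← div_mul_div_cancel₀ hyz.ne_zero.1]
    exact ih.mul hyz.isAtomQuotient_div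

theorem weakPath_iff_exists_reflTransGen {a b : K} :
    WeakPath D a b ↔ ∃ x y, x ≠ 0 ∧ Submodule.span D {x} = Submodule.span D {a} ∧
      Submodule.span D {y} = Submodule.span D {b} ∧ ReflTransGen (AtomStep D) x y := by
  constructor
  · rintro ⟨k, x, hx, hx0, hxk, hstep⟩
    refine ⟨x 0, x k, hx 0 k.zero_le, hx0, hxk, ?_⟩
    refine ReflTransGen.lift x (fun _ _ h => h) _ _
      (reflTransGen_of_succ_of_le (fun i j => AtomStep D (x i) (x j)) (fun i hi => ?_) k.zero_le)
    simpa only [AtomStep, Nat.add_sub_cancel, Order.succ_eq_add_one] using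
      hstep (i + 1) (by omega) hi.2
  · rintro ⟨x, y, hx, hxa, hyb, hxy⟩
    obtain ⟨k, s, rfl, rfl, hs⟩ := hxy.exists_seq
    refine ⟨k, s, fun i hi => ?_, hxa, hyb, fun i hi₁ hi₂ => ?_⟩
    · rcases i with _ | i
      · exact hx
      · exact (hs i (by omega)).ne_zero.2
    · obtain ⟨j, rfl⟩ : ∃ j, i = j + 1 := ⟨i - 1, by omega⟩
      simpa only [AtomStep, Nat.add_sub_cancel] using hs j (by omega)

end

/-- For nonzero `a b : K`, `a / b = u • (π₁⋯πₙ)/(ξ₁⋯ξₘ)` for some unit `u` of `D` and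
irreducibles `πᵢ, ξᵢ` of `D` iff there is a finite weak path connecting `a` to `b`. -/
theorem connected_iff_weak_path
    (D K : Type*) [CommRing D] [IsDomain D] [Field K] [Algebra D K] [IsFractionRing D K]
    (a b : K) (ha : a ≠ 0) (hb : b ≠ 0) :
    (∃ (u : Dˣ) (l₁ l₂ : List D), (∀ p ∈ l₁, Irreducible p) ∧ (∀ p ∈ l₂, Irreducible p) ∧
        a / b = algebraMap D K (↑u * l₁.prod) / algebraMap D K l₂.prod) ↔
      WeakPath D a b := by
  change IsAtomQuotient D (a / b) ↔ _
  rw [weakPath_iff_exists_reflTransGen]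
  constructor
  · rintro ⟨u, l₁, l₂, h₁, h₂, hab⟩
    have hl₂ : algebraMap D K l₂.prod ≠ 0 := algebraMap_prod_ne_zero h₂
    have hmeet : a * algebraMap D K l₂.prod = u • b * algebraMap D K l₁.prod := by
      rw [div_eq_div_iff hb hl₂] at hab
      rw [Units.smul_def, Algebra.smul_def, hab, map_mul]
      ring
    refine ⟨a, u • b, ha, rfl, Submodule.span_singleton_group_smul_eq D u b, ?_⟩
    refine (reflTransGen_atomStep_mul_prod ha h₂).trans (hmeet ▸ symm ?_)
    exact reflTransGen_atomStep_mul_prod ((smul_ne_zero_iff_ne u).mpr hb) h₁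
  · rintro ⟨x, y, hx, hxa, hyb, hxy⟩
    obtain ⟨u, rfl⟩ := Submodule.span_singleton_eq_span_singleton.mp hxa
    obtain ⟨v, rfl⟩ := Submodule.span_singleton_eq_span_singleton.mp hyb
    have hquot : u • x / v • y = algebraMap D K u * (algebraMap D K v)⁻¹ * (x / y) := by
      simp only [Units.smul_def, Algebra.smul_def]
      ring
    rw [hquot]
    exact ((IsAtomQuotient.of_unit u).mul (IsAtomQuotient.of_unit v).inv).mul
      (isAtomQuotient_div_of_reflTransGen hx hxy)
end

section
/- Let 𝔉 be the subgroup of K× generated by the irreducible elements of D together with the units of D. Then for nonzero a, b ∈ K, there is a weak path connecting a to b (a finite sequence x₀, …, xₖ of nonzero elements of K with x₀D = aD, xₖD = bD, and each consecutive quotient xᵢ₋₁/xᵢ or xᵢ/xᵢ₋₁ an irreducible element of D) if and only if a𝔉 = b𝔉; consequently, the map aD ↦ a𝔉 induces a bijection from the set of equivalence classes of principal fractional ideals under the weak-path relation onto the quotient group K×/𝔉. -/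
/-- `𝔉` : the subgroup of `Kˣ` generated by the irreducible elements of `D` together
with the units of `D`. -/
def frakF (D K : Type*) [CommRing D] [Field K] [Algebra D K] : Subgroup Kˣ :=
  Subgroup.closure {u : Kˣ | ∃ p : D, (Irreducible p ∨ IsUnit p) ∧ (u : K) = algebraMap D K p}

section UnitsCoset

variable {G₀ : Type*} [CommGroupWithZero G₀] (H : Subgroup G₀ˣ)

open Classical in
noncomputable def unitsCoset : G₀ →* WithZero (G₀ˣ ⧸ H) :=
  (WithZero.map' (QuotientGroup.mk' H)).toMonoidHom.comp
    WithZero.withZeroUnitsEquiv.symm.toMonoidHom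

@[simp]
lemma unitsCoset_coe (u : G₀ˣ) :
    unitsCoset H u = ((u : G₀ˣ ⧸ H) : WithZero (G₀ˣ ⧸ H)) := by
  simp [unitsCoset]

lemma unitsCoset_mul_of_mem (a : G₀) {u : G₀ˣ} (hu : u ∈ H) :
    unitsCoset H (a * u) = unitsCoset H a := by
  rw [map_mul, unitsCoset_coe, (QuotientGroup.eq_one_iff u).2 hu, WithZero.coe_one, mul_one]

end UnitsCoset

open Submodule

section

variable {D K : Type*} [CommRing D] [Field K] [Algebra D K]

def IrreducibleStep (D : Type*) {K : Type*} [CommRing D] [Field K] [Algebra D K] (c d : K) :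
    Prop :=
  (∃ π : D, Irreducible π ∧ c / d = algebraMap D K π) ∨
    (∃ π : D, Irreducible π ∧ d / c = algebraMap D K π)

def IsWeakChain (D : Type*) {K : Type*} [CommRing D] [Field K] [Algebra D K] (k : ℕ)
    (x : ℕ → K) : Prop :=
  (∀ i ≤ k, x i ≠ 0) ∧ ∀ i, 1 ≤ i → i ≤ k → IrreducibleStep D (x (i - 1)) (x i)

lemma weakPath_iff_exists_isWeakChain {a b : K} :
    WeakPath D a b ↔ ∃ k x, IsWeakChain D k x ∧ span D {x 0} = span D {a} ∧
      span D {x k} = span D {b} := by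
  simp only [WeakPath, IsWeakChain, IrreducibleStep]
  exact exists_congr fun _ => exists_congr fun _ => by tauto

lemma IrreducibleStep.mul_left {a b : K} (h : IrreducibleStep D a b) {c : K} (hc : c ≠ 0) :
    IrreducibleStep D (c * a) (c * b) := by
  simpa only [IrreducibleStep, mul_div_mul_left _ _ hc] using h

namespace IsWeakChain

variable {k l : ℕ} {x y : ℕ → K}

lemma mul_left (h : IsWeakChain D k x) {c : K} (hc : c ≠ 0) :
    IsWeakChain D k fun i => c * x i :=
  ⟨fun i hi => mul_ne_zero hc (h.1 i hi), fun i h1 h2 => (h.2 i h1 h2).mul_left hc⟩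

lemma reverse (h : IsWeakChain D k x) : IsWeakChain D k fun i => x (k - i) := by
  refine ⟨fun i _ => h.1 _ (Nat.sub_le k i), fun i h1 h2 => ?_⟩
  have := (h.2 (k - i + 1) (by omega) (by omega)).symm
  rwa [Nat.add_sub_cancel, show k - i + 1 = k - (i - 1) by omega] at this

lemma append (hx : IsWeakChain D k x) (hy : IsWeakChain D l y) (hxy : x k = y 0) :
    ∃ z, IsWeakChain D (k + l) z ∧ z 0 = x 0 ∧ z (k + l) = y l := by
  set z : ℕ → K := fun i => if i ≤ k then x i else y (i - k)
  have z_of_le : ∀ i ≤ k, z i = x i := fun i hi => if_pos hi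
  have z_of_ge : ∀ i, k ≤ i → z i = y (i - k) := by
    intro i hi
    by_cases h : i ≤ k
    · obtain rfl : i = k := by omega
      rw [z_of_le i h, hxy, Nat.sub_self]
    · exact if_neg h
  refine ⟨z, ⟨fun i hi => ?_, fun i h1 h2 => ?_⟩, z_of_le 0 k.zero_le, ?_⟩
  · rcases le_total i k with h | h
    · rw [z_of_le i h]; exact hx.1 i h
    · rw [z_of_ge i h]; exact hy.1 _ (by omega)
  · by_cases h : i ≤ k
    · rw [z_of_le i h, z_of_le (i - 1) (by omega)]; exact hx.2 i h1 h
    · rw [z_of_ge i (by omega), z_of_ge (i - 1) (by omega), show i - 1 - k = i - k - 1 by omega]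
      exact hy.2 (i - k) (by omega) (by omega)
  · rw [z_of_ge _ (Nat.le_add_right k l), Nat.add_sub_cancel_left]

end IsWeakChain

lemma span_singleton_algebraMap_mul {d : D} (hd : IsUnit d) (x : K) :
    span D {algebraMap D K d * x} = span D {x} := by
  rw [← Algebra.smul_def, span_singleton_smul_eq hd]

namespace WeakPath

variable {a b c : K}

lemma of_span_eq (ha : a ≠ 0) (h : span D {a} = span D {b}) : WeakPath D a b :=
  weakPath_iff_exists_isWeakChain.2 ⟨0, fun _ => a, ⟨fun _ _ => ha, by omega⟩, rfl, h⟩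

lemma mul_irreducible (hc : c ≠ 0) {π : D} (hπ : Irreducible π)
    (h0 : algebraMap D K π ≠ 0) :
    WeakPath D c (c * algebraMap D K π) := by
  refine weakPath_iff_exists_isWeakChain.2
    ⟨1, fun i => c * algebraMap D K π ^ i, ⟨fun i _ => mul_ne_zero hc (pow_ne_zero i h0),
      fun i h1 h2 => ?_⟩, by simp, by simp⟩
  obtain rfl : i = 1 := by omega
  exact Or.inr ⟨π, hπ, by simp [hc]⟩

lemma symm (h : WeakPath D a b) : WeakPath D b a := by
  obtain ⟨k, x, hx, h0, hk⟩ := weakPath_iff_exists_isWeakChain.1 h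
  exact weakPath_iff_exists_isWeakChain.2
    ⟨k, _, hx.reverse, by simpa using hk, by simpa using h0⟩

end WeakPath

lemma mem_frakF_of_eq_algebraMap {v : Kˣ} {p : D} (hp : Irreducible p ∨ IsUnit p)
    (hv : (v : K) = algebraMap D K p) :
    v ∈ frakF D K :=
  Subgroup.subset_closure ⟨p, hp, hv⟩

lemma unitsCoset_frakF_eq_of_div_eq {c d : K} (hc : c ≠ 0) (hd : d ≠ 0) {π : D}
    (hπ : Irreducible π) (h : c / d = algebraMap D K π) :
    unitsCoset (frakF D K) c = unitsCoset (frakF D K) d := by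
  have hmem : Units.mk0 (c / d) (div_ne_zero hc hd) ∈ frakF D K :=
    mem_frakF_of_eq_algebraMap (Or.inl hπ) h
  rw [← unitsCoset_mul_of_mem _ d hmem, Units.val_mk0, mul_div_cancel₀ _ hd]

lemma IrreducibleStep.unitsCoset_frakF_eq {c d : K} (h : IrreducibleStep D c d) (hc : c ≠ 0)
    (hd : d ≠ 0) : unitsCoset (frakF D K) c = unitsCoset (frakF D K) d := by
  rcases h with ⟨π, hπ, h⟩ | ⟨π, hπ, h⟩
  · exact unitsCoset_frakF_eq_of_div_eq hc hd hπ h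
  · exact (unitsCoset_frakF_eq_of_div_eq hd hc hπ h).symm

lemma IsWeakChain.unitsCoset_frakF_eq {k : ℕ} {x : ℕ → K} (h : IsWeakChain D k x) :
    unitsCoset (frakF D K) (x 0) = unitsCoset (frakF D K) (x k) := by
  suffices ∀ i ≤ k, unitsCoset (frakF D K) (x 0) = unitsCoset (frakF D K) (x i) from
    this k le_rfl
  intro i hi
  induction i with
  | zero => rfl
  | succ i ih =>
    exact (ih (by omega)).trans
      ((h.2 (i + 1) (by omega) hi).unitsCoset_frakF_eq (h.1 i (by omega)) (h.1 _ hi))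

variable [IsDomain D] [Module.IsTorsionFree D K]

lemma WeakPath.trans {a b c : K} (hab : WeakPath D a b) (hbc : WeakPath D b c) :
    WeakPath D a c := by
  obtain ⟨k, x, hx, hx0, hxk⟩ := weakPath_iff_exists_isWeakChain.1 hab
  obtain ⟨l, y, hy, hy0, hyl⟩ := weakPath_iff_exists_isWeakChain.1 hbc
  obtain ⟨u, hu⟩ := span_singleton_eq_span_singleton.1 (hy0.trans hxk.symm)
  rw [Units.smul_def, Algebra.smul_def] at hu
  obtain ⟨z, hz, hz0, hzl⟩ :=
    hx.append (hy.mul_left (u.isUnit.map (algebraMap D K)).ne_zero) hu.symm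
  refine weakPath_iff_exists_isWeakChain.2 ⟨k + l, z, hz, hz0 ▸ hx0, ?_⟩
  rw [hzl, span_singleton_algebraMap_mul u.isUnit, hyl]

lemma unitsCoset_frakF_eq_of_span_eq {x y : K} (h : span D {x} = span D {y}) :
    unitsCoset (frakF D K) x = unitsCoset (frakF D K) y := by
  obtain ⟨u, rfl⟩ := span_singleton_eq_span_singleton.1 h
  rw [Units.smul_def, Algebra.smul_def, mul_comm]
  have hu : u.map (algebraMap D K) ∈ frakF D K := mem_frakF_of_eq_algebraMap (Or.inr u.isUnit) rfl
  exact (unitsCoset_mul_of_mem _ x hu).symm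

lemma WeakPath.unitsCoset_frakF_eq {a b : K} (h : WeakPath D a b) :
    unitsCoset (frakF D K) a = unitsCoset (frakF D K) b := by
  obtain ⟨k, x, hx, h0, hk⟩ := weakPath_iff_exists_isWeakChain.1 h
  rw [← unitsCoset_frakF_eq_of_span_eq h0, ← unitsCoset_frakF_eq_of_span_eq hk]
  exact hx.unitsCoset_frakF_eq

lemma WeakPath.mul_of_mem_frakF {u : Kˣ} (hu : u ∈ frakF D K) {c : K} (hc : c ≠ 0) :
    WeakPath D c (c * u) := by
  induction hu using Subgroup.closure_induction generalizing c with
  | mem v hv =>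
    obtain ⟨p, hp | hp, hvp⟩ := hv
    · rw [hvp]
      exact WeakPath.mul_irreducible hc hp (hvp ▸ v.ne_zero)
    · refine WeakPath.of_span_eq hc ?_
      rw [hvp, mul_comm, span_singleton_algebraMap_mul hp]
  | one => simpa using WeakPath.of_span_eq hc rfl
  | mul v w _ _ hv hw =>
    simpa only [Units.val_mul, mul_assoc] using (hv hc).trans (hw (mul_ne_zero hc v.ne_zero))
  | inv v _ hv => simpa using (hv (mul_ne_zero hc (v⁻¹).ne_zero)).symm

theorem weakPath_iff_mk_eq_mk (a b : Kˣ) :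
    WeakPath D (a : K) b ↔ (a : Kˣ ⧸ frakF D K) = b := by
  refine ⟨fun h => WithZero.coe_injective ?_, fun h => ?_⟩
  · simpa only [unitsCoset_coe] using h.unitsCoset_frakF_eq
  · simpa using WeakPath.mul_of_mem_frakF (QuotientGroup.eq.1 h) a.ne_zero

end

/-- Two nonzero elements of `K` are connected by a weak path iff they have the same
coset modulo `𝔉`; consequently `aD ↦ a𝔉` induces a bijection from the weak-path classes
of principal fractional ideals onto `Kˣ ⧸ 𝔉`. -/
theorem components_biject_with_quotient_by_frakF
    (D K : Type*) [CommRing D] [IsDomain D] [Field K] [Algebra D K] [IsFractionRing D K] :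
    (∀ a b : Kˣ, WeakPath D (a : K) (b : K) ↔
      (QuotientGroup.mk a : Kˣ ⧸ frakF D K) = QuotientGroup.mk b) ∧
    ∃ e : Quot (fun a b : Kˣ => WeakPath D (a : K) (b : K)) ≃ (Kˣ ⧸ frakF D K),
      ∀ a : Kˣ, e (Quot.mk _ a) = QuotientGroup.mk a :=
  ⟨weakPath_iff_mk_eq_mk,
    Quot.congrRight fun a b => (weakPath_iff_mk_eq_mk a b).trans Quotient.eq, fun _ => rfl⟩
end

section
/- Let D = ℤ + Xℚ[X]. For nonzero polynomials a, b ∈ D, there exist irreducible elements π₁, …, πₙ and ξ₁, …, ξₘ of D (n, m ≥ 0) and a unit u of D such that a·ξ₁⋯ξₘ = u·b·π₁⋯πₙ if and only if ord(a) = ord(b). -/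
open Polynomial

noncomputable def ZplusXQX : Subring (Polynomial ℚ) where
  carrier := {f | ∃ n : ℤ, f.coeff 0 = (n : ℚ)}
  zero_mem' := ⟨0, by simp⟩
  one_mem' := ⟨1, by simp⟩
  add_mem' := by
    rintro f g ⟨m, hm⟩ ⟨n, hn⟩
    exact ⟨m + n, by simp [hm, hn]⟩
  mul_mem' := by
    rintro f g ⟨m, hm⟩ ⟨n, hn⟩
    exact ⟨m * n, by simp [Polynomial.mul_coeff_zero, hm, hn]⟩
  neg_mem' := by
    rintro f ⟨m, hm⟩
    exact ⟨-m, by simp [hm]⟩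

/-! Taking constant terms is a ring map `D → ℤ`, so units and irreducibles of `D` have nonzero
constant term: for irreducibles because otherwise `f = 2 · (f / 2)` in `D`. Multiplying by them
therefore does not change `ord`. Conversely, write `a = Xᵏ A` and `b = Xᵏ B` with `A(0), B(0) ≠ 0`
and clear denominators: `a · (n B) = b · (n A)` with `n A, n B ∈ D` of nonzero constant term.
Such elements are products of a unit and irreducibles, since `deg f + |f(0)|` strictly grows under
multiplication by a nonunit of nonzero constant term. -/

theorem exists_eq_unit_mul_prod_irreducible_of_lt_mul {α : Type*} [CommMonoid α]
    {P : α → Prop} (μ : α → ℕ) (hP : ∀ x y, P (x * y) → P y)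
    (hμ : ∀ x y, P (x * y) → ¬IsUnit x → μ y < μ (x * y)) {x : α} (hx : P x) :
    ∃ (u : αˣ) (l : List α), (∀ p ∈ l, Irreducible p) ∧ x = u * l.prod := by
  induction hn : μ x using Nat.strong_induction_on generalizing x with
  | _ n ih =>
  by_cases hu : IsUnit x
  · exact ⟨hu.unit, [], by simp, by simp⟩
  by_cases hirr : Irreducible x
  · exact ⟨1, [x], by simpa using hirr, by simp⟩
  obtain ⟨y, z, rfl, hy, hz⟩ : ∃ y z, x = y * z ∧ ¬IsUnit y ∧ ¬IsUnit z := by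
    simpa [irreducible_iff, hu] using hirr
  have hzy : P (z * y) := mul_comm y z ▸ hx
  obtain ⟨u, l, hl, rfl⟩ := ih (μ y) (hn ▸ mul_comm z y ▸ hμ z y hzy hz) (hP z y hzy) rfl
  obtain ⟨v, m, hm, rfl⟩ := ih (μ z) (hn ▸ hμ _ z hx hy) (hP _ z hx) rfl
  refine ⟨u * v, l ++ m, fun p hp => (List.mem_append.mp hp).elim (hl p) (hm p), ?_⟩
  rw [List.prod_append, Units.val_mul]
  ac_rfl

theorem Polynomial.exists_eq_X_pow_natTrailingDegree_mul {R : Type*} [CommRing R]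
    {p : R[X]} (hp : p ≠ 0) : ∃ q : R[X], p = X ^ p.natTrailingDegree * q ∧ q.coeff 0 ≠ 0 := by
  obtain ⟨q, hq, hndvd⟩ := p.exists_eq_pow_rootMultiplicity_mul_and_not_dvd hp 0
  rw [rootMultiplicity_eq_natTrailingDegree', C_0, sub_zero] at hq
  rw [C_0, sub_zero, X_dvd_iff] at hndvd
  exact ⟨q, hq, hndvd⟩

namespace ZplusXQX

theorem coeff_zero_eq_num (x : ZplusXQX) :
    (x : ℚ[X]).coeff 0 = ((x : ℚ[X]).coeff 0).num := by
  obtain ⟨n, hn⟩ := x.2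
  rw [hn, Rat.num_intCast]

noncomputable def constCoeff : ZplusXQX →+* ℤ where
  toFun x := ((x : ℚ[X]).coeff 0).num
  map_one' := by simp
  map_mul' x y := Int.cast_injective (α := ℚ) <| by
    rw [Int.cast_mul, ← coeff_zero_eq_num, ← coeff_zero_eq_num, ← coeff_zero_eq_num]
    exact mul_coeff_zero _ _
  map_zero' := by simp
  map_add' x y := Int.cast_injective (α := ℚ) <| by
    rw [Int.cast_add, ← coeff_zero_eq_num, ← coeff_zero_eq_num, ← coeff_zero_eq_num]
    exact coeff_add _ _ _

@[simp]
theorem coe_constCoeff (x : ZplusXQX) : (constCoeff x : ℚ) = (x : ℚ[X]).coeff 0 :=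
  (coeff_zero_eq_num x).symm

theorem coe_ne_zero_of_constCoeff_ne_zero {x : ZplusXQX} (hx : constCoeff x ≠ 0) :
    (x : ℚ[X]) ≠ 0 := by
  intro h
  simp [← Int.cast_inj (α := ℚ), h] at hx

theorem isUnit_of_natDegree_eq_zero {x : ZplusXQX} (hdeg : (x : ℚ[X]).natDegree = 0)
    (hu : IsUnit (constCoeff x)) : IsUnit x := by
  refine IsUnit.of_mul_eq_one x (Subtype.ext ?_)
  rw [Subring.coe_mul, eq_C_of_natDegree_eq_zero hdeg, ← C_mul, ← coe_constCoeff,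
    ← Int.cast_mul, Int.isUnit_mul_self hu]
  simp

theorem natDegree_add_natAbs_lt_mul {x y : ZplusXQX} (hxy : constCoeff (x * y) ≠ 0)
    (hx : ¬IsUnit x) :
    (y : ℚ[X]).natDegree + (constCoeff y).natAbs
      < ((x * y : ZplusXQX) : ℚ[X]).natDegree + (constCoeff (x * y)).natAbs := by
  rw [map_mul] at hxy ⊢
  obtain ⟨hx0, hy0⟩ := mul_ne_zero_iff.mp hxy
  rw [Subring.coe_mul, natDegree_mul (coe_ne_zero_of_constCoeff_ne_zero hx0)
    (coe_ne_zero_of_constCoeff_ne_zero hy0), Int.natAbs_mul]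
  have hbig : 1 ≤ (x : ℚ[X]).natDegree ∨ 2 ≤ (constCoeff x).natAbs := by
    by_contra! h
    refine hx (isUnit_of_natDegree_eq_zero (by omega) (Int.isUnit_iff_natAbs_eq.mpr ?_))
    have := Int.natAbs_pos.mpr hx0
    omega
  have := Int.natAbs_pos.mpr hx0
  have := Int.natAbs_pos.mpr hy0
  rcases hbig with h | h <;> nlinarith

theorem exists_eq_unit_mul_prod_irreducible {x : ZplusXQX} (hx : constCoeff x ≠ 0) :
    ∃ (u : ZplusXQXˣ) (l : List ZplusXQX), (∀ p ∈ l, Irreducible p) ∧ x = u * l.prod :=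
  exists_eq_unit_mul_prod_irreducible_of_lt_mul (P := fun x => constCoeff x ≠ 0)
    (fun x => (x : ℚ[X]).natDegree + (constCoeff x).natAbs)
    (fun x y hxy => by rw [map_mul] at hxy; exact right_ne_zero_of_mul hxy)
    (fun _ _ => natDegree_add_natAbs_lt_mul) hx

theorem constCoeff_ne_zero_of_irreducible {x : ZplusXQX} (hx : Irreducible x) :
    constCoeff x ≠ 0 := by
  intro h0
  have hhalf : C (1 / 2 : ℚ) * (x : ℚ[X]) ∈ ZplusXQX :=
    ⟨0, by simp [← coe_constCoeff, h0]⟩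
  have hx2 : x = 2 * ⟨_, hhalf⟩ := Subtype.ext <| by
    rw [Subring.coe_mul, ← mul_assoc, show ((2 : ZplusXQX) : ℚ[X]) = C 2 from map_ofNat ZplusXQX.subtype 2, ← C_mul]
    norm_num
  rcases hx.isUnit_or_isUnit hx2 with h | h
  · simpa [map_ofNat, Int.isUnit_iff] using h.map constCoeff
  · have hhalf0 : constCoeff ⟨_, hhalf⟩ = 0 := by
      rw [← Int.cast_inj (α := ℚ), coe_constCoeff]
      simp [← coe_constCoeff, h0]
    exact not_isUnit_zero (hhalf0 ▸ h.map constCoeff)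

theorem constCoeff_list_prod_ne_zero {l : List ZplusXQX} (hl : ∀ p ∈ l, Irreducible p) :
    constCoeff l.prod ≠ 0 := by
  rw [map_list_prod]
  refine List.prod_ne_zero fun h0 => ?_
  obtain ⟨p, hp, hp0⟩ := List.mem_map.mp h0
  exact constCoeff_ne_zero_of_irreducible (hl p hp) hp0

theorem natTrailingDegree_mul_of_constCoeff_ne_zero (x : ZplusXQX) {y : ZplusXQX}
    (hy : constCoeff y ≠ 0) :
    ((x * y : ZplusXQX) : ℚ[X]).natTrailingDegree = (x : ℚ[X]).natTrailingDegree := by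
  by_cases hx : (x : ℚ[X]) = 0
  · simp [hx]
  rw [Subring.coe_mul, natTrailingDegree_mul hx (coe_ne_zero_of_constCoeff_ne_zero hy),
    natTrailingDegree_eq_zero (p := (y : ℚ[X])).mpr (.inr ?_), add_zero]
  rwa [← coe_constCoeff, Int.cast_ne_zero]

theorem C_natCast_mul_mem_of_den_dvd {f : ℚ[X]} {n : ℕ} (hn : (f.coeff 0).den ∣ n) :
    C (n : ℚ) * f ∈ ZplusXQX := by
  obtain ⟨m, rfl⟩ := hn
  refine ⟨m * (f.coeff 0).num, ?_⟩
  rw [coeff_C_mul]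
  push_cast
  rw [← Rat.mul_den_eq_num]
  ring

theorem exists_mul_eq_mul_of_natTrailingDegree_eq {a b : ZplusXQX} (ha : a ≠ 0) (hb : b ≠ 0)
    (hab : (a : ℚ[X]).natTrailingDegree = (b : ℚ[X]).natTrailingDegree) :
    ∃ y z : ZplusXQX, constCoeff y ≠ 0 ∧ constCoeff z ≠ 0 ∧ a * y = b * z := by
  obtain ⟨A, hA, hA0⟩ := exists_eq_X_pow_natTrailingDegree_mul (p := (a : ℚ[X])) (by simpa using ha)
  obtain ⟨B, hB, hB0⟩ := exists_eq_X_pow_natTrailingDegree_mul (p := (b : ℚ[X])) (by simpa using hb)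
  set n := (A.coeff 0).den * (B.coeff 0).den
  have hn : (n : ℚ) ≠ 0 := by positivity
  refine ⟨⟨_, C_natCast_mul_mem_of_den_dvd (f := B) (n := n) (dvd_mul_left _ _)⟩,
    ⟨_, C_natCast_mul_mem_of_den_dvd (f := A) (n := n) (dvd_mul_right _ _)⟩, ?_, ?_, ?_⟩
  · rw [← Int.cast_ne_zero (α := ℚ), coe_constCoeff, coeff_C_mul]
    exact mul_ne_zero hn hB0
  · rw [← Int.cast_ne_zero (α := ℚ), coe_constCoeff, coeff_C_mul]
    exact mul_ne_zero hn hA0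
  · apply Subtype.ext
    rw [Subring.coe_mul, Subring.coe_mul, hA, hB, hab]
    ring

end ZplusXQX

open ZplusXQX

/-- In `D = ℤ + Xℚ[X]`, for nonzero `a b ∈ D` there are irreducibles `π₁,…,πₙ` and
`ξ₁,…,ξₘ` of `D` and a unit `u` of `D` with `a ξ₁⋯ξₘ = u b π₁⋯πₙ` iff
`ord a = ord b`. -/
theorem ZplusXQX_connected_iff_ord_eq (a b : ZplusXQX) (ha : a ≠ 0) (hb : b ≠ 0) :
    (∃ (u : ZplusXQXˣ) (l₁ l₂ : List ZplusXQX),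
        (∀ p ∈ l₁, Irreducible p) ∧ (∀ p ∈ l₂, Irreducible p) ∧
        a * l₂.prod = ↑u * b * l₁.prod) ↔
      (a : Polynomial ℚ).natTrailingDegree = (b : Polynomial ℚ).natTrailingDegree := by
  constructor
  · rintro ⟨u, l₁, l₂, hl₁, hl₂, heq⟩
    have hu : constCoeff (u * l₁.prod) ≠ 0 := by
      rw [map_mul]
      exact mul_ne_zero (u.isUnit.map constCoeff).ne_zero (constCoeff_list_prod_ne_zero hl₁)
    rw [← natTrailingDegree_mul_of_constCoeff_ne_zero a (constCoeff_list_prod_ne_zero hl₂),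
      ← natTrailingDegree_mul_of_constCoeff_ne_zero b hu, heq, mul_left_comm, mul_assoc]
  · intro hab
    obtain ⟨y, z, hy, hz, hyz⟩ := exists_mul_eq_mul_of_natTrailingDegree_eq ha hb hab
    obtain ⟨u, l₂, hl₂, rfl⟩ := exists_eq_unit_mul_prod_irreducible hy
    obtain ⟨v, l₁, hl₁, rfl⟩ := exists_eq_unit_mul_prod_irreducible hz
    refine ⟨u⁻¹ * v, l₁, l₂, hl₁, hl₂, ?_⟩
    rw [Units.val_mul]
    linear_combination (u⁻¹ : ZplusXQXˣ) * hyz - a * l₂.prod * u.inv_mul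
end

section
/- Let D = ℤ + Xℚ[X]. The set Xℚ[X] = {X·q(X) : q ∈ ℚ[X]} is a nonzero prime ideal of D that contains no irreducible element of D. -/
open Polynomial

namespace ZplusXQX

lemma mem_of_X_dvd {p : ℚ[X]} (hp : X ∣ p) : p ∈ ZplusXQX :=
  ⟨0, by simpa using X_dvd_iff.mp hp⟩

lemma not_isUnit_two : ¬IsUnit (2 : ZplusXQX) := by
  rintro ⟨u, hu⟩
  obtain ⟨n, hn⟩ := (↑u⁻¹ : ZplusXQX).2
  have h := congrArg (fun g : ZplusXQX => (g : ℚ[X]).coeff 0) u.mul_inv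
  have h2 : ((2 : ZplusXQX) : ℚ[X]) = 2 := map_ofNat ZplusXQX.subtype 2
  simp only [hu, Subring.coe_mul, h2, mul_coeff_zero, coeff_ofNat_zero, hn, OneMemClass.coe_one,
    coeff_one_zero] at h
  have : 2 * n = 1 := by exact_mod_cast (by linarith : (2 : ℚ) * n = 1)
  omega

noncomputable def XQX : Ideal ZplusXQX :=
  (Ideal.span {(X : ℚ[X])}).comap ZplusXQX.subtype

lemma mem_XQX {f : ZplusXQX} : f ∈ XQX ↔ X ∣ (f : ℚ[X]) :=
  Ideal.mem_span_singleton

instance : XQX.IsPrime :=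
  have : (Ideal.span {(X : ℚ[X])}).IsPrime := (Ideal.span_singleton_prime X_ne_zero).mpr prime_X
  Ideal.comap_isPrime _ _

lemma XQX_ne_bot : XQX ≠ ⊥ := by
  intro h
  have hX : (⟨X, mem_of_X_dvd dvd_rfl⟩ : ZplusXQX) ∈ XQX := mem_XQX.mpr dvd_rfl
  rw [h, Ideal.mem_bot] at hX
  exact X_ne_zero (congrArg Subtype.val hX)

lemma exists_eq_two_mul_of_mem_XQX {f : ZplusXQX} (hf : f ∈ XQX) :
    ∃ g ∈ XQX, f = 2 * g := by
  have hdvd : X ∣ C (1 / 2 : ℚ) * (f : ℚ[X]) := dvd_mul_of_dvd_right (mem_XQX.mp hf) _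
  refine ⟨⟨_, mem_of_X_dvd hdvd⟩, mem_XQX.mpr hdvd, Subtype.ext ?_⟩
  change (f : ℚ[X]) = 2 * (C (1 / 2 : ℚ) * f)
  rw [← mul_assoc, ← C_ofNat, ← C_mul]
  norm_num

lemma not_irreducible_of_mem_XQX {f : ZplusXQX} (hf : f ∈ XQX) : ¬Irreducible f := by
  intro hirr
  obtain ⟨g, hg, rfl⟩ := exists_eq_two_mul_of_mem_XQX hf
  rcases hirr.isUnit_or_isUnit rfl with h2 | hgu
  · exact not_isUnit_two h2
  · exact Ideal.IsPrime.ne_top inferInstance (Ideal.eq_top_of_isUnit_mem _ hg hgu)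

end ZplusXQX

open ZplusXQX in
/-- In `D = ℤ + Xℚ[X]`, the set `Xℚ[X]` is a nonzero prime ideal of `D` containing no
irreducible element of `D`. -/
theorem ZplusXQX_prime_ideal_without_atoms :
    ∃ I : Ideal ZplusXQX,
      (∀ f : ZplusXQX, f ∈ I ↔ ∃ q : Polynomial ℚ, (f : Polynomial ℚ) = Polynomial.X * q) ∧
      I ≠ ⊥ ∧ I.IsPrime ∧ ∀ f ∈ I, ¬ Irreducible f :=
  ⟨XQX, fun _ => mem_XQX, XQX_ne_bot, inferInstance, fun _ => not_irreducible_of_mem_XQX⟩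
end

section
/- If D is quasi atomic, then every nonzero prime ideal of D contains an irreducible element of D. -/
/-- `D` is quasi atomic: for every nonzero nonunit `a` there is `b ∈ D` such that
`a * b` is a finite product of irreducibles. -/
def IsQuasiAtomicDomain (D : Type*) [CommRing D] : Prop :=
  ∀ a : D, a ≠ 0 → ¬ IsUnit a →
    ∃ b : D, ∃ l : List D, l ≠ [] ∧ (∀ p ∈ l, Irreducible p) ∧ a * b = l.prod

lemma list_prod_mem_prime {D : Type*} [CommRing D] (P : Ideal D) [hP : P.IsPrime]
    (l : List D) (hl : l.prod ∈ P) : ∃ x ∈ l, x ∈ P := by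
  induction l with
  | nil => simp at hl; exact absurd ((Ideal.eq_top_iff_one P).2 hl) hP.1
  | cons a t ih =>
    rw [List.prod_cons] at hl
    rcases hP.mem_or_mem hl with h | h
    · exact ⟨a, by simp, h⟩
    · obtain ⟨x, hx, hxP⟩ := ih h
      exact ⟨x, by simp [hx], hxP⟩

/-- If `D` is quasi atomic then every nonzero prime ideal of `D` contains an
irreducible element. -/
theorem prime_ideal_contains_atom_of_quasi_atomic (D : Type*) [CommRing D] [IsDomain D]
    (h : IsQuasiAtomicDomain D) :
    ∀ P : Ideal D, P.IsPrime → P ≠ ⊥ → ∃ π ∈ P, Irreducible π := by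
  intro P hP hne
  obtain ⟨a, haP, ha0⟩ : ∃ a ∈ P, a ≠ 0 := by
    by_contra hc
    push_neg at hc
    exact hne (le_antisymm (fun x hx => (Submodule.mem_bot D).2 (hc x hx)) bot_le)
  have hau : ¬ IsUnit a := fun hu => hP.1 ((Ideal.eq_top_of_isUnit_mem P haP hu))
  obtain ⟨b, l, hlne, hirr, heq⟩ := h a ha0 hau
  have : l.prod ∈ P := heq ▸ P.mul_mem_right b haP
  obtain ⟨x, hx, hxP⟩ := list_prod_mem_prime P l this
  exact ⟨x, hxP, hirr x hx⟩
end

section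
/- D is almost atomic if and only if every nonzero element of K can be written in the form u·(π₁⋯πₙ)/(ξ₁⋯ξₘ), where u is a unit of D and π₁, …, πₙ, ξ₁, …, ξₘ are irreducible elements of D (n, m ≥ 0, empty products allowed); equivalently, the subgroup of K× generated by the irreducible elements of D together with the units of D is all of K×. -/
/-- `D` is almost atomic: for every nonzero nonunit `a` there are irreducibles
`π₁, …, πₙ` (`n ≥ 0`) such that `a • π₁⋯πₙ` is a finite product of irreducibles. -/
def IsAlmostAtomicDomain (D : Type*) [CommRing D] : Prop :=
  ∀ a : D, a ≠ 0 → ¬ IsUnit a →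
    ∃ l₁ l₂ : List D, (∀ p ∈ l₁, Irreducible p) ∧ l₂ ≠ [] ∧ (∀ p ∈ l₂, Irreducible p) ∧
      a * l₁.prod = l₂.prod

/- Both characterisations pass through the set of quotients `u·(π₁⋯πₙ)/(ξ₁⋯ξₘ)` in `K`.
It is closed under multiplication and inversion, so its nonzero part is exactly `𝔉`; and since
every element of `K` is a quotient of two elements of `D`, it contains `K×` as soon as it
contains every nonzero element of `D`, which clearing denominators turns into almost
atomicity (a unit factor is absorbed into an irreducible, and there is one because `a` is not
a unit). -/

section AlmostAtomic

variable {D : Type*} [CommRing D]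

theorem isAlmostAtomicDomain_iff_exists_mul_prod_eq_unit_mul_prod :
    IsAlmostAtomicDomain D ↔ ∀ a : D, a ≠ 0 → ∃ (u : Dˣ) (l₁ l₂ : List D),
      (∀ p ∈ l₁, Irreducible p) ∧ (∀ p ∈ l₂, Irreducible p) ∧ a * l₂.prod = u * l₁.prod := by
  constructor
  · intro hD a ha
    by_cases hu : IsUnit a
    · exact ⟨hu.unit, [], [], by simp, by simp, by simp⟩
    · obtain ⟨l₁, l₂, h₁, -, h₂, heq⟩ := hD a ha hu
      exact ⟨1, l₂, l₁, h₂, h₁, by simpa using heq⟩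
  · intro h a ha hu
    obtain ⟨u, l₁, l₂, h₁, h₂, heq⟩ := h a ha
    match l₁, h₁ with
    | [], _ =>
      exact (hu (isUnit_of_mul_isUnit_left (y := l₂.prod) (by simp [heq]))).elim
    | p :: t, h₁ =>
      refine ⟨l₂, (u * p) :: t, h₂, List.cons_ne_nil _ _, ?_, ?_⟩
      · intro q hq
        rcases List.mem_cons.1 hq with rfl | hq
        · exact (irreducible_units_mul u).2 (h₁ p List.mem_cons_self)
        · exact h₁ q (List.mem_cons_of_mem _ hq)
      · rw [heq, List.prod_cons, List.prod_cons, mul_assoc]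

end AlmostAtomic

section Quotients

variable (D K : Type*) [CommRing D] [Field K] [Algebra D K]

def atomQuotients : Set K :=
  {x | ∃ (u : Dˣ) (l₁ l₂ : List D), (∀ p ∈ l₁, Irreducible p) ∧ (∀ p ∈ l₂, Irreducible p) ∧
    x = algebraMap D K (↑u * l₁.prod) / algebraMap D K l₂.prod}

variable {D K}

theorem algebraMap_mem_atomQuotients {a : D} (ha : Irreducible a ∨ IsUnit a) :
    algebraMap D K a ∈ atomQuotients D K := by
  rcases ha with ha | ha
  · exact ⟨1, [a], [], by simpa using ha, by simp, by simp⟩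
  · exact ⟨ha.unit, [], [], by simp, by simp, by simp⟩

theorem mul_mem_atomQuotients {x y : K} (hx : x ∈ atomQuotients D K)
    (hy : y ∈ atomQuotients D K) : x * y ∈ atomQuotients D K := by
  obtain ⟨u, A, B, hA, hB, rfl⟩ := hx
  obtain ⟨v, C, E, hC, hE, rfl⟩ := hy
  refine ⟨u * v, A ++ C, B ++ E, ?_, ?_, ?_⟩
  · simpa [or_imp, forall_and] using ⟨hA, hC⟩
  · simpa [or_imp, forall_and] using ⟨hB, hE⟩
  · simp only [Units.val_mul, List.prod_append, map_mul]
    ring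

theorem inv_mem_atomQuotients {x : K} (hx : x ∈ atomQuotients D K) :
    x⁻¹ ∈ atomQuotients D K := by
  obtain ⟨u, A, B, hA, hB, rfl⟩ := hx
  refine ⟨u⁻¹, B, A, hB, hA, ?_⟩
  simp only [map_mul, map_units_inv, div_eq_mul_inv, mul_inv, inv_inv]
  ring

theorem div_mem_atomQuotients {x y : K} (hx : x ∈ atomQuotients D K)
    (hy : y ∈ atomQuotients D K) : x / y ∈ atomQuotients D K :=
  div_eq_mul_inv x y ▸ mul_mem_atomQuotients hx (inv_mem_atomQuotients hy)

theorem mem_frakF_of_val_eq_algebraMap_prod {l : List D} (hl : ∀ p ∈ l, Irreducible p)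
    {x : Kˣ} (hx : (x : K) = algebraMap D K l.prod) : x ∈ frakF D K := by
  induction l generalizing x with
  | nil => simp [show x = 1 from Units.ext (by simpa using hx)]
  | cons p t ih =>
    have hpt : algebraMap D K p * algebraMap D K t.prod ≠ 0 := by
      rw [← map_mul, ← List.prod_cons, ← hx]
      exact x.ne_zero
    have hx' :
        x = Units.mk0 _ (left_ne_zero_of_mul hpt) * Units.mk0 _ (right_ne_zero_of_mul hpt) :=
      Units.ext (by simp [hx])
    rw [hx']
    exact mul_mem (Subgroup.subset_closure ⟨p, .inl (hl p List.mem_cons_self), rfl⟩)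
      (ih (fun q hq => hl q (List.mem_cons_of_mem _ hq)) rfl)

theorem mem_frakF_iff {x : Kˣ} : x ∈ frakF D K ↔ (x : K) ∈ atomQuotients D K := by
  constructor
  · intro hx
    induction hx using Subgroup.closure_induction with
    | mem y hy =>
      obtain ⟨p, hp, hy⟩ := hy
      exact hy ▸ algebraMap_mem_atomQuotients hp
    | one => exact ⟨1, [], [], by simp, by simp, by simp⟩
    | mul y z _ _ hy hz => exact mul_mem_atomQuotients hy hz
    | inv y _ hy => exact Units.val_inv_eq_inv_val y ▸ inv_mem_atomQuotients hy
  · rintro ⟨u, A, B, hA, hB, hx⟩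
    have hAB : algebraMap D K u * algebraMap D K A.prod ≠ 0 ∧ algebraMap D K B.prod ≠ 0 := by
      simpa [hx] using x.ne_zero
    have hu := left_ne_zero_of_mul hAB.1
    have hA0 := right_ne_zero_of_mul hAB.1
    have hx' : x = Units.mk0 _ hu * Units.mk0 _ hA0 * (Units.mk0 _ hAB.2)⁻¹ :=
      Units.ext (by simp [hx, div_eq_mul_inv])
    rw [hx']
    exact mul_mem (mul_mem (Subgroup.subset_closure ⟨u, .inr u.isUnit, rfl⟩)
      (mem_frakF_of_val_eq_algebraMap_prod hA rfl))
      (inv_mem (mem_frakF_of_val_eq_algebraMap_prod hB rfl))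

theorem frakF_eq_top_iff :
    frakF D K = ⊤ ↔ ∀ x : K, x ≠ 0 → x ∈ atomQuotients D K := by
  refine ⟨fun h x hx => ?_, fun h => eq_top_iff.2 fun x _ => mem_frakF_iff.2 (h x x.ne_zero)⟩
  exact mem_frakF_iff.1 (h ▸ Subgroup.mem_top (Units.mk0 x hx))

variable [IsDomain D] [IsFractionRing D K]

theorem algebraMap_mem_atomQuotients_iff {a : D} :
    algebraMap D K a ∈ atomQuotients D K ↔ ∃ (u : Dˣ) (l₁ l₂ : List D),
      (∀ p ∈ l₁, Irreducible p) ∧ (∀ p ∈ l₂, Irreducible p) ∧ a * l₂.prod = u * l₁.prod := by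
  refine exists₃_congr fun u l₁ l₂ => and_congr_right fun _ => and_congr_right fun h₂ => ?_
  have hB : algebraMap D K l₂.prod ≠ 0 :=
    (map_ne_zero_iff _ (IsFractionRing.injective D K)).2
      (List.prod_ne_zero fun h0 => (h₂ 0 h0).ne_zero rfl)
  rw [eq_div_iff hB, ← map_mul, (IsFractionRing.injective D K).eq_iff]

theorem isAlmostAtomicDomain_iff_forall_mem_atomQuotients :
    IsAlmostAtomicDomain D ↔ ∀ x : K, x ≠ 0 → x ∈ atomQuotients D K := by
  simp only [isAlmostAtomicDomain_iff_exists_mul_prod_eq_unit_mul_prod,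
    ← algebraMap_mem_atomQuotients_iff (K := K)]
  constructor
  · intro h x hx
    obtain ⟨n, d, hd, rfl⟩ := IsFractionRing.div_surjective D x
    exact div_mem_atomQuotients (h n fun hn => hx (by simp [hn]))
      (h d (nonZeroDivisors.ne_zero hd))
  · exact fun h a ha => h _ ((map_ne_zero_iff _ (IsFractionRing.injective D K)).2 ha)

end Quotients

/-- `D` is almost atomic iff every nonzero element of `K` is of the form
`u • (π₁⋯πₙ)/(ξ₁⋯ξₘ)` with `u` a unit of `D` and the `πᵢ, ξᵢ` irreducible in `D`;
equivalently, iff the subgroup of `Kˣ` generated by the irreducibles and units of `D`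
is all of `Kˣ`. -/
theorem almost_atomic_iff_frakF_eq_top
    (D K : Type*) [CommRing D] [IsDomain D] [Field K] [Algebra D K] [IsFractionRing D K] :
    (IsAlmostAtomicDomain D ↔
      ∀ x : K, x ≠ 0 → ∃ (u : Dˣ) (l₁ l₂ : List D),
        (∀ p ∈ l₁, Irreducible p) ∧ (∀ p ∈ l₂, Irreducible p) ∧
        x = algebraMap D K (↑u * l₁.prod) / algebraMap D K l₂.prod) ∧
    (IsAlmostAtomicDomain D ↔ frakF D K = ⊤) :=
  ⟨isAlmostAtomicDomain_iff_forall_mem_atomQuotients,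
    isAlmostAtomicDomain_iff_forall_mem_atomQuotients.trans frakF_eq_top_iff.symm⟩
end
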